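/- arXiv:1607.04026 — 2 statements merged into one kernel-verified Lean document; each statement's English description precedes it below -/
import Mathlib

section
/- Let H ⊆ ℝ be an open interval, let n ∈ ℕ with n ≥ 2, let ω = (ω₁, …, ω_n) : H → ℝⁿ be an n-dimensional positive Chebyshev system over H such that ω_{⟨n−1⟩} is an (n−1)-dimensional positive Chebyshev system over H, and let f : H → ℝ. If there exist ω-convex functions g, h : H → ℝ with f = g − h, then for every subinterval [a, b] ⊆ H the ω-variation V^ω_{[a,b]}(f) is finite; moreover, for all a₁ < … < a_n = a and b = b₁ < … < b_n in H, one has V^ω_{[a,b]}(f) ≤ [b₁, …, b_n; g+h]_ω − [a₁, …, a_n; g+h]_ω. -/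
/-!
For an `ω`-convex `g`, the divided difference `[z₀, …, z_{n-1}; g]_ω` does not decrease when the
window is shifted to `[z₁, …, z_n; g]_ω`. Indeed, since `ω_{⟨n-1⟩}` is a Chebyshev system, some
`p ∈ span (ω₁, …, ω_{n-1})` agrees with `g` at the common points `z₁, …, z_{n-1}`; replacing `g` by
`e = g - p` changes none of the determinants involved, and expanding them along the `e`-row leaves
only the entries `e(z₀)` and `e(z_n)`. Then `Φ_{(ω, g)}(z₀, …, z_n) ≥ 0`, multiplied by
`Φ_{ω_{⟨n-1⟩}}(z₁, …, z_{n-1}) > 0`, is exactly the claimed inequality.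

Chaining shifts along `a₁ < … < a_n = x₀ < … < x_m = b₁ < … < b_n`, the divided differences of `g`
and of `h` increase from `[a; ·]_ω` to `[b; ·]_ω`, so each term `|Δ[·; g - h]_ω|` of the variation
sum is at most `Δ[·; g + h]_ω`, and the sum telescopes.
-/

/-- `Φ_ω(x₁,…,x_m) = det(ω_i(x_j))`. -/
noncomputable def Phi {m : ℕ} (ω : Fin m → ℝ → ℝ) (x : Fin m → ℝ) : ℝ :=
  Matrix.det (Matrix.of fun i j => ω i (x j))

/-- `ω` is an `m`-dimensional positive Chebyshev system over `H`. -/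
def IsPosChebyshev {m : ℕ} (ω : Fin m → ℝ → ℝ) (H : Set ℝ) : Prop :=
  ∀ x : Fin m → ℝ, (∀ i, x i ∈ H) → StrictMono x → 0 < Phi ω x

/-- `f` is convex with respect to the `m`-dimensional system `ω` on `S`. -/
def IsConvexWRT {m : ℕ} (ω : Fin m → ℝ → ℝ) (S : Set ℝ) (f : ℝ → ℝ) : Prop :=
  ∀ x : Fin (m + 1) → ℝ, (∀ i, x i ∈ S) → StrictMono x → 0 ≤ Phi (Fin.snoc ω f) x

/-- The generalized divided difference `[x₁,…,x_k; f]_{ω⟨k⟩}`: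
the numerator replaces the last function `ω_k` by `f`. -/
noncomputable def divDiff {k : ℕ} (ω : Fin k → ℝ → ℝ) (f : ℝ → ℝ) (x : Fin k → ℝ) : ℝ :=
  Phi (fun i => if (i : ℕ) + 1 = k then f else ω i) x / Phi ω x

open scoped ENNReal

/-- The `ω`-variation `V^ω_{[a,b]}(f)`: the supremum, over all partitions
`a = x₀ < x₁ < … < x_m = b` with `m ≥ n`, of
`∑_{i=0}^{m-n} |[x_{i+1},…,x_{i+n}; f]_ω - [x_i,…,x_{i+n-1}; f]_ω|`, valued in `[0, ∞]`. -/
noncomputable def omegaVar {n : ℕ} (ω : Fin n → ℝ → ℝ) (f : ℝ → ℝ) (a b : ℝ) : ℝ≥0∞ :=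
  ⨆ (m : ℕ) (_ : n ≤ m) (x : Fin (m + 1) → ℝ) (_ : StrictMono x) (_ : x 0 = a)
      (_ : x (Fin.last m) = b),
    ∑ i : Fin (m - n + 1),
      ENNReal.ofReal
        |divDiff ω f (fun t : Fin n =>
            x ⟨(i : ℕ) + 1 + (t : ℕ), by have := i.isLt; have := t.isLt; omega⟩)
          - divDiff ω f (fun t : Fin n =>
            x ⟨(i : ℕ) + (t : ℕ), by have := i.isLt; have := t.isLt; omega⟩)|

open Matrix Set Submodule Topology

section Determinant

variable {k : ℕ} (ν : Fin k → ℝ → ℝ) (x : Fin (k + 1) → ℝ)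

theorem Phi_snoc_eq_sum (f : ℝ → ℝ) :
    Phi (Fin.snoc ν f) x =
      ∑ j : Fin (k + 1), (-1) ^ (k + (j : ℕ)) * f (x j) * Phi ν (x ∘ j.succAbove) := by
  rw [Phi, det_succ_row _ (Fin.last k)]
  refine Finset.sum_congr rfl fun j _ => ?_
  simp [Phi, Fin.succAbove_last, submatrix]

theorem Phi_snoc_congr {f g : ℝ → ℝ} (hfg : ∀ j, f (x j) = g (x j)) :
    Phi (Fin.snoc ν f) x = Phi (Fin.snoc ν g) x := by
  simp only [Phi_snoc_eq_sum, hfg]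

theorem Phi_snoc_add (f g : ℝ → ℝ) :
    Phi (Fin.snoc ν (f + g)) x = Phi (Fin.snoc ν f) x + Phi (Fin.snoc ν g) x := by
  simp only [Phi_snoc_eq_sum, Pi.add_apply, ← Finset.sum_add_distrib]
  exact Finset.sum_congr rfl fun j _ => by ring

theorem Phi_snoc_sub (f g : ℝ → ℝ) :
    Phi (Fin.snoc ν (f - g)) x = Phi (Fin.snoc ν f) x - Phi (Fin.snoc ν g) x := by
  simp only [Phi_snoc_eq_sum, Pi.sub_apply, ← Finset.sum_sub_distrib]
  exact Finset.sum_congr rfl fun j _ => by ring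

theorem Phi_snoc_smul (c : ℝ) (f : ℝ → ℝ) :
    Phi (Fin.snoc ν (c • f)) x = c * Phi (Fin.snoc ν f) x := by
  simp only [Phi_snoc_eq_sum, Pi.smul_apply, smul_eq_mul, Finset.mul_sum]
  exact Finset.sum_congr rfl fun j _ => by ring

theorem Phi_snoc_self (i : Fin k) : Phi (Fin.snoc ν (ν i)) x = 0 :=
  det_zero_of_row_eq (Fin.castSucc_lt_last i).ne <| by
    ext j
    simp

theorem Phi_snoc_eq_zero_of_mem_span {p : ℝ → ℝ} (hp : p ∈ span ℝ (range ν)) :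
    Phi (Fin.snoc ν p) x = 0 := by
  induction hp using Submodule.span_induction with
  | mem _ h => obtain ⟨i, rfl⟩ := h; exact Phi_snoc_self ν x i
  | zero => simpa using Phi_snoc_smul ν x 0 0
  | add f g _ _ hf hg => rw [Phi_snoc_add, hf, hg, add_zero]
  | smul c f _ hf => rw [Phi_snoc_smul, hf, mul_zero]

theorem Phi_snoc_add_of_mem_span (f : ℝ → ℝ) {p : ℝ → ℝ}
    (hp : p ∈ span ℝ (range ν)) : Phi (Fin.snoc ν (f + p)) x = Phi (Fin.snoc ν f) x := by
  rw [Phi_snoc_add, Phi_snoc_eq_zero_of_mem_span ν x hp, add_zero]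

theorem exists_mem_span_eqOn {y : Fin k → ℝ} (hy : Phi ν y ≠ 0) (g : ℝ → ℝ) :
    ∃ p ∈ span ℝ (range ν), ∀ j, p (y j) = g (y j) := by
  set W : Matrix (Fin k) (Fin k) ℝ := of fun i j => ν i (y j)
  set c := (g ∘ y) ᵥ* W⁻¹
  refine ⟨∑ i, c i • ν i, sum_mem fun i _ => smul_mem _ _ (subset_span ⟨i, rfl⟩),
    fun j => ?_⟩
  have hc : c ᵥ* W = g ∘ y := by
    rw [vecMul_vecMul, nonsing_inv_mul W (Ne.isUnit hy), vecMul_one]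
  simpa [vecMul, dotProduct, W] using congrFun hc j

end Determinant

section Expansion

variable {k : ℕ} (f : ℝ → ℝ)

theorem Phi_snoc_of_forall_succ (ν : Fin k → ℝ → ℝ) {x : Fin (k + 1) → ℝ}
    (hf : ∀ j : Fin k, f (x j.succ) = 0) :
    Phi (Fin.snoc ν f) x = (-1) ^ k * f (x 0) * Phi ν (x ∘ Fin.succ) := by
  simp [Phi_snoc_eq_sum, Fin.sum_univ_succ, hf]

theorem Phi_snoc_of_forall_castSucc (ν : Fin k → ℝ → ℝ) {x : Fin (k + 1) → ℝ}
    (hf : ∀ j : Fin k, f (x j.castSucc) = 0) :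
    Phi (Fin.snoc ν f) x = f (x (Fin.last k)) * Phi ν (x ∘ Fin.castSucc) := by
  simp [Phi_snoc_eq_sum, Fin.sum_univ_castSucc, hf, ← two_mul]

theorem Phi_snoc_of_forall_castSucc_succ (ν : Fin (k + 1) → ℝ → ℝ)
    {x : Fin (k + 2) → ℝ} (hf : ∀ j : Fin k, f (x j.castSucc.succ) = 0) :
    Phi (Fin.snoc ν f) x = (-1) ^ (k + 1) * f (x 0) * Phi ν (x ∘ Fin.succ)
      + f (x (Fin.last (k + 1))) * Phi ν (x ∘ Fin.castSucc) := by
  rw [Phi_snoc_eq_sum, Fin.sum_univ_succ, Fin.sum_univ_castSucc]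
  simp [hf, ← two_mul]

end Expansion

section DividedDifference

variable {k : ℕ} (ω : Fin (k + 1) → ℝ → ℝ) (x : Fin (k + 1) → ℝ)

theorem divDiff_eq_Phi_snoc_init (f : ℝ → ℝ) :
    divDiff ω f x = Phi (Fin.snoc (Fin.init ω) f) x / Phi ω x := by
  unfold divDiff
  congr 2
  funext i
  induction i using Fin.lastCases with
  | last => simp
  | cast i => simp [Fin.init, i.isLt.ne]

theorem divDiff_congr {f g : ℝ → ℝ} (hfg : ∀ j, f (x j) = g (x j)) :
    divDiff ω f x = divDiff ω g x := by
  simp only [divDiff_eq_Phi_snoc_init, Phi_snoc_congr _ x hfg]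

theorem divDiff_sub (f g : ℝ → ℝ) :
    divDiff ω (f - g) x = divDiff ω f x - divDiff ω g x := by
  simp only [divDiff_eq_Phi_snoc_init, Phi_snoc_sub, sub_div]

theorem divDiff_add (f g : ℝ → ℝ) :
    divDiff ω (f + g) x = divDiff ω f x + divDiff ω g x := by
  simp only [divDiff_eq_Phi_snoc_init, Phi_snoc_add, add_div]

theorem divDiff_add_of_mem_span (f : ℝ → ℝ) {p : ℝ → ℝ}
    (hp : p ∈ span ℝ (range (Fin.init ω))) : divDiff ω (f + p) x = divDiff ω f x := by
  simp only [divDiff_eq_Phi_snoc_init, Phi_snoc_add_of_mem_span _ _ _ hp]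

end DividedDifference

theorem IsConvexWRT.add {m : ℕ} {ω : Fin m → ℝ → ℝ} {S : Set ℝ} {g h : ℝ → ℝ}
    (hg : IsConvexWRT ω S g) (hh : IsConvexWRT ω S h) : IsConvexWRT ω S (g + h) :=
  fun x hxS hx => (Phi_snoc_add ω x g h).symm ▸ add_nonneg (hg x hxS hx) (hh x hxS hx)

def window {α : Type*} (u : ℕ → α) (n j : ℕ) : Fin n → α := fun t => u (j + t)

section Windows

variable {k : ℕ} {H : Set ℝ} {ω : Fin (k + 1) → ℝ → ℝ} {g : ℝ → ℝ}

theorem divDiff_castSucc_le_divDiff_succ (hω : IsPosChebyshev ω H)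
    (hω' : IsPosChebyshev (Fin.init ω) H) (hg : IsConvexWRT ω H g) {z : Fin (k + 2) → ℝ}
    (hzH : ∀ i, z i ∈ H) (hz : StrictMono z) :
    divDiff ω g (z ∘ Fin.castSucc) ≤ divDiff ω g (z ∘ Fin.succ) := by
  set y : Fin k → ℝ := fun j => z j.castSucc.succ
  have hP : 0 < Phi (Fin.init ω) y :=
    hω' y (fun j => hzH _) (hz.comp (Fin.strictMono_succ.comp Fin.strictMono_castSucc))
  have hPi : 0 < Phi ω (z ∘ Fin.castSucc) :=
    hω _ (fun j => hzH _) (hz.comp Fin.strictMono_castSucc)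
  have hPt : 0 < Phi ω (z ∘ Fin.succ) := hω _ (fun j => hzH _) (hz.comp Fin.strictMono_succ)
  -- Subtracting the interpolant at the inner points leaves every determinant unchanged.
  obtain ⟨p, hp, hpy⟩ := exists_mem_span_eqOn _ hP.ne' g
  set e := g - p
  have he : ∀ j, e (y j) = 0 := fun j => sub_eq_zero.2 (hpy j).symm
  have hge : g = e + p := (sub_add_cancel g p).symm
  have hp' : p ∈ span ℝ (range ω) := span_mono (range_comp_subset_range _ ω) hp
  have hconv : 0 ≤ (-1) ^ (k + 1) * e (z 0) * Phi ω (z ∘ Fin.succ)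
      + e (z (Fin.last (k + 1))) * Phi ω (z ∘ Fin.castSucc) := by
    rw [← Phi_snoc_of_forall_castSucc_succ e ω he, ← Phi_snoc_add_of_mem_span ω z e hp',
      ← hge]
    exact hg z hzH hz
  have hyi : (z ∘ Fin.castSucc) ∘ Fin.succ = y :=
    funext fun j => congrArg z (Fin.succ_castSucc j).symm
  have hyt : (z ∘ Fin.succ) ∘ Fin.castSucc = y := rfl
  rw [hge, divDiff_add_of_mem_span _ _ _ hp, divDiff_add_of_mem_span _ _ _ hp,
    divDiff_eq_Phi_snoc_init, divDiff_eq_Phi_snoc_init,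
    Phi_snoc_of_forall_succ e _ fun j => (congrArg e (congrFun hyi j)).trans (he j),
    Phi_snoc_of_forall_castSucc e _ he, div_le_div_iff₀ hPi hPt, hyi, hyt]
  simp only [Function.comp_apply, Fin.castSucc_zero, Fin.succ_last]
  linear_combination mul_nonneg hP.le hconv

theorem strictMono_window {n L j : ℕ} {u : ℕ → ℝ} (hu : StrictMonoOn u (Iic L))
    (hj : j + n ≤ L) : StrictMono (window u (n + 1) j) := fun s t hst =>
  hu (by simp only [mem_Iic]; omega) (by simp only [mem_Iic]; omega) (by simpa using hst)

theorem divDiff_window_mono (hω : IsPosChebyshev ω H) (hω' : IsPosChebyshev (Fin.init ω) H)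
    (hg : IsConvexWRT ω H g) {u : ℕ → ℝ} {L : ℕ} (hu : StrictMonoOn u (Iic L))
    (huH : ∀ s ≤ L, u s ∈ H) {i j : ℕ} (hij : i ≤ j) (hj : j + k ≤ L) :
    divDiff ω g (window u (k + 1) i) ≤ divDiff ω g (window u (k + 1) j) := by
  induction j, hij using Nat.le_induction with
  | base => exact le_rfl
  | succ j _ ih =>
    refine (ih (by omega)).trans ?_
    have hshift := divDiff_castSucc_le_divDiff_succ hω hω' hg (z := window u (k + 2) j)
      (fun t => huH _ (by omega)) (strictMono_window hu (by omega))
    have hsucc : window u (k + 1) (j + 1) = window u (k + 2) j ∘ Fin.succ := by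
      funext t
      simp only [window, Function.comp_apply, Fin.val_succ, add_assoc, add_comm 1]
    rwa [hsucc]

theorem divDiff_le_divDiff_of_last_eq_zero (hω : IsPosChebyshev ω H)
    (hω' : IsPosChebyshev (Fin.init ω) H) (hg : IsConvexWRT ω H g) {A C : Fin (k + 1) → ℝ}
    (hAH : ∀ i, A i ∈ H) (hCH : ∀ i, C i ∈ H) (hA : StrictMono A) (hC : StrictMono C)
    (hAC : A (Fin.last k) = C 0) : divDiff ω g A ≤ divDiff ω g C := by
  set u : ℕ → ℝ := fun s => if s ≤ k then A (Fin.clamp s k) else C (Fin.clamp (s - k) k)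
  have hu : StrictMonoOn u (Iic (k + k)) := by
    refine strictMonoOn_Iic_of_lt_succ fun s hs => ?_
    simp only [Order.succ_eq_add_one, u]
    split_ifs
    · exact hA (by rw [Fin.lt_def, Fin.coe_clamp, Fin.coe_clamp]; omega)
    · obtain rfl : s = k := by omega
      rw [show Fin.clamp s s = Fin.last s from Fin.ext (by simp), hAC]
      exact hC (by rw [Fin.lt_def, Fin.coe_clamp, Fin.val_zero]; omega)
    · omega
    · exact hC (by rw [Fin.lt_def, Fin.coe_clamp, Fin.coe_clamp]; omega)
  have huH : ∀ s ≤ k + k, u s ∈ H := fun s _ => by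
    simp only [u]
    split_ifs
    exacts [hAH _, hCH _]
  have hclamp : ∀ {s : ℕ} (hs : s ≤ k), Fin.clamp s k = ⟨s, by omega⟩ :=
    fun hs => Fin.ext (min_eq_left hs)
  have hu0 : window u (k + 1) 0 = A := by
    funext t
    simp [window, u, t.is_le, hclamp t.is_le]
  have huk : window u (k + 1) k = C := by
    funext t
    rcases Fin.eq_zero_or_eq_succ t with rfl | ⟨t, rfl⟩
    · simpa [window, u, hclamp le_rfl, Fin.last] using hAC
    · simp [window, u, hclamp (Nat.succ_le_of_lt t.isLt), Fin.succ]
  have := divDiff_window_mono hω hω' hg hu huH (Nat.zero_le k) le_rfl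
  rwa [hu0, huk] at this

end Windows

theorem sum_abs_sub_sub_le {a b : ℕ → ℝ} {N : ℕ} (ha : ∀ i < N, a i ≤ a (i + 1))
    (hb : ∀ i < N, b i ≤ b (i + 1)) :
    ∑ i ∈ Finset.range N, |(a (i + 1) - b (i + 1)) - (a i - b i)|
      ≤ (a N + b N) - (a 0 + b 0) := by
  calc ∑ i ∈ Finset.range N, |(a (i + 1) - b (i + 1)) - (a i - b i)|
      ≤ ∑ i ∈ Finset.range N, ((a (i + 1) + b (i + 1)) - (a i + b i)) := by
        refine Finset.sum_le_sum fun i hi => abs_le.2 ⟨?_, ?_⟩ <;>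
          linarith [ha i (Finset.mem_range.1 hi), hb i (Finset.mem_range.1 hi)]
    _ = (a N + b N) - (a 0 + b 0) := Finset.sum_range_sub (fun i => a i + b i) N

theorem sum_abs_divDiff_window_sub_le {k : ℕ} {H : Set ℝ} {ω : Fin (k + 1) → ℝ → ℝ}
    (hω : IsPosChebyshev ω H) (hω' : IsPosChebyshev (Fin.init ω) H) {f g h : ℝ → ℝ}
    (hg : IsConvexWRT ω H g) (hh : IsConvexWRT ω H h) (hf : ∀ t ∈ H, f t = g t - h t)
    {u : ℕ → ℝ} {L : ℕ} (hu : StrictMonoOn u (Iic L)) (huH : ∀ s ≤ L, u s ∈ H) {N : ℕ}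
    (hN : N + k ≤ L) :
    ∑ i ∈ Finset.range N,
        |divDiff ω f (window u (k + 1) (i + 1)) - divDiff ω f (window u (k + 1) i)|
      ≤ divDiff ω (g + h) (window u (k + 1) N) - divDiff ω (g + h) (window u (k + 1) 0) := by
  set D := fun (φ : ℝ → ℝ) (j : ℕ) => divDiff ω φ (window u (k + 1) j)
  have hD : ∀ j ≤ N, D f j = D g j - D h j := fun j hj => by
    simp only [D, ← divDiff_sub]
    exact divDiff_congr _ _ fun t => hf _ (huH _ (by omega))
  have hmono : ∀ φ, IsConvexWRT ω H φ → ∀ j < N, D φ j ≤ D φ (j + 1) := fun φ hφ j _ =>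
    divDiff_window_mono hω hω' hφ hu huH (Nat.le_succ j) (by omega)
  calc ∑ i ∈ Finset.range N, |D f (i + 1) - D f i|
      = ∑ i ∈ Finset.range N, |(D g (i + 1) - D h (i + 1)) - (D g i - D h i)| :=
        Finset.sum_congr rfl fun i hi => by
          have := Finset.mem_range.1 hi
          rw [hD i (by omega), hD (i + 1) (by omega)]
    _ ≤ (D g N + D h N) - (D g 0 + D h 0) := sum_abs_sub_sub_le (hmono g hg) (hmono h hh)
    _ = D (g + h) N - D (g + h) 0 := by simp only [D, divDiff_add]

theorem exists_pos_sub_mul_mem_and_add_mul_mem {s : Set ℝ} {a : ℝ} (hs : s ∈ 𝓝 a) (k : ℕ) :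
    ∃ δ > 0, ∀ i : ℕ, i ≤ k → a - i * δ ∈ s ∧ a + i * δ ∈ s := by
  obtain ⟨ε, hε, hball⟩ := Metric.mem_nhds_iff.1 hs
  refine ⟨ε / (k + 1), by positivity, fun i hi => ⟨hball ?_, hball ?_⟩⟩ <;>
  · have hik : (i : ℝ) < k + 1 := by exact_mod_cast Nat.lt_succ_of_le hi
    have : (i : ℝ) * (ε / (k + 1)) < ε := by
      rw [mul_div_assoc', div_lt_iff₀ (by positivity)]
      nlinarith
    simpa [abs_of_pos hε, abs_of_pos (by positivity : (0 : ℝ) < k + 1)] using this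

theorem omegaVar_le_divDiff_sub {k : ℕ} {H : Set ℝ} {ω : Fin (k + 1) → ℝ → ℝ}
    (hω : IsPosChebyshev ω H) (hω' : IsPosChebyshev (Fin.init ω) H) {f g h : ℝ → ℝ}
    (hg : IsConvexWRT ω H g) (hh : IsConvexWRT ω H h) (hf : ∀ t ∈ H, f t = g t - h t)
    {a b : ℝ} (habH : Icc a b ⊆ H) {A B : Fin (k + 1) → ℝ} (hAH : ∀ i, A i ∈ H)
    (hBH : ∀ i, B i ∈ H) (hA : StrictMono A) (hB : StrictMono B) (hAa : A (Fin.last k) = a)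
    (hBb : B 0 = b) :
    omegaVar ω f a b ≤ ENNReal.ofReal (divDiff ω (g + h) B - divDiff ω (g + h) A) := by
  refine iSup₂_le fun m hm => iSup₂_le fun x hx => iSup₂_le fun hx0 hxm => ?_
  set N := m - (k + 1) + 1
  set u : ℕ → ℝ := fun s => x (Fin.clamp s m)
  have hux : ∀ {s : ℕ} (hs : s ≤ m), u s = x ⟨s, by omega⟩ := fun hs =>
    congrArg x (Fin.ext (min_eq_left hs))
  have hu : StrictMonoOn u (Iic m) := fun s hs t ht hst => by
    rw [hux hs, hux ht]
    exact hx hst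
  have huH : ∀ s ≤ m, u s ∈ H := fun s hs => habH
    ⟨hx0 ▸ hx.monotone (Fin.zero_le _), hxm ▸ hx.monotone (Fin.le_last _)⟩
  set W := window u (k + 1)
  have hsum := sum_abs_divDiff_window_sub_le hω hω' hg hh hf hu huH (N := N) (by omega)
  have hA0 : divDiff ω (g + h) A ≤ divDiff ω (g + h) (W 0) :=
    divDiff_le_divDiff_of_last_eq_zero hω hω' (hg.add hh) hAH (fun t => huH _ (by omega)) hA
      (strictMono_window hu (by omega)) (by simp [W, window, hAa, ← hx0, hux])
  have hNB : divDiff ω (g + h) (W N) ≤ divDiff ω (g + h) B :=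
    divDiff_le_divDiff_of_last_eq_zero hω hω' (hg.add hh) (fun t => huH _ (by omega)) hBH
      (strictMono_window hu (by omega)) hB
      (by simp only [W, window, Fin.val_last, hBb, ← hxm, hux (by omega : N + k ≤ m)]; congr; omega)
  calc ∑ i : Fin N, ENNReal.ofReal _
      = ∑ i ∈ Finset.range N,
          ENNReal.ofReal |divDiff ω f (W (i + 1)) - divDiff ω f (W i)| := by
        rw [← Fin.sum_univ_eq_sum_range]
        refine Finset.sum_congr rfl fun i _ => ?_
        have := i.isLt
        congr 3 <;>
          exact congrArg (divDiff ω f) (funext fun t => (hux (by have := t.isLt; omega)).symm)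
    _ ≤ _ := by
        rw [← ENNReal.ofReal_sum_of_nonneg fun i _ => abs_nonneg _]
        exact ENNReal.ofReal_le_ofReal (by linarith)

/-- Theorem 3: if `f = g - h` with `g, h` `ω`-convex on the open interval `H`, then for every
`[a,b] ⊆ H` the `ω`-variation `V^ω_{[a,b]}(f)` is finite; moreover, for all
`a₁ < … < a_n = a` and `b = b₁ < … < b_n` in `H`,
`V^ω_{[a,b]}(f) ≤ [b₁,…,b_n; g+h]_ω - [a₁,…,a_n; g+h]_ω`. -/
theorem variation_of_difference_of_omega_convex (H : Set ℝ) (hHopen : IsOpen H)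
    (n : ℕ) (hn : 2 ≤ n)
    (ω : Fin n → ℝ → ℝ)
    (hω : IsPosChebyshev ω H)
    (hω' : IsPosChebyshev (fun i : Fin (n - 1) => ω (Fin.castLE (by omega) i)) H)
    (f g h : ℝ → ℝ)
    (hg : IsConvexWRT ω H g) (hh : IsConvexWRT ω H h)
    (hf : ∀ t ∈ H, f t = g t - h t) :
    ∀ a b : ℝ, a < b → Set.Icc a b ⊆ H →
      omegaVar ω f a b ≠ ⊤ ∧
      ∀ A B : Fin n → ℝ, (∀ i, A i ∈ H) → (∀ i, B i ∈ H) →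
        StrictMono A → StrictMono B →
        A ⟨n - 1, by omega⟩ = a → B ⟨0, by omega⟩ = b →
        omegaVar ω f a b ≤
          ENNReal.ofReal
            (divDiff ω (fun t => g t + h t) B - divDiff ω (fun t => g t + h t) A) := by
  obtain ⟨k, rfl⟩ : ∃ k, n = k + 1 := ⟨n - 1, by omega⟩
  intro a b hab habH
  refine ⟨?_, fun A B hAH hBH hA hB hAa hBb =>
    omegaVar_le_divDiff_sub hω hω' hg hh hf habH hAH hBH hA hB hAa hBb⟩
  obtain ⟨δa, hδa, hAH⟩ :=
    exists_pos_sub_mul_mem_and_add_mul_mem (hHopen.mem_nhds (habH ⟨le_rfl, hab.le⟩)) k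
  obtain ⟨δb, hδb, hBH⟩ :=
    exists_pos_sub_mul_mem_and_add_mul_mem (hHopen.mem_nhds (habH ⟨hab.le, le_rfl⟩)) k
  have hA : StrictMono fun i : Fin (k + 1) => a - i.rev * δa := fun i j hij => by
    have : (j.rev : ℝ) < i.rev := by exact_mod_cast Fin.rev_lt_rev.2 hij
    simp only
    nlinarith
  have hB : StrictMono fun i : Fin (k + 1) => b + i * δb := fun i j hij => by
    have : (i : ℝ) < j := by exact_mod_cast hij
    simp only
    nlinarith
  exact ne_top_of_le_ne_top ENNReal.ofReal_ne_top <| omegaVar_le_divDiff_sub hω hω' hg hh hf habH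
    (fun i => (hAH _ i.rev.is_le).1) (fun i => (hBH _ i.is_le).2) hA hB (by simp) (by simp)
end

section
/- Let n ∈ ℕ and let I ⊆ ℝ be an open interval whose length is at most 2π. Then the function ω : I → ℝ^{2n+1} given by ω(x) = (1, cos x, sin x, cos 2x, sin 2x, …, cos nx, sin nx) is a (2n+1)-dimensional positive Chebyshev system over I; that is, the (2n+1)×(2n+1) determinant det(ω_i(x_j)) is positive for all x₁ < … < x_{2n+1} in I. -/
/-!
Over `ℂ`, the identities `cos kx = e^{ikx} - i sin kx` and `sin kx = (i/2)(e^{-ikx} - e^{ikx})`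
are triangular row operations turning `(ω_i(x_j))` into `(e^{i μ_i x_j})`, with frequencies
`μ = 0, 1, -1, …, n, -n`, at the cost of a factor `(i/2)^n`. Sorting the rows into the order
`-n, …, n` is an even permutation, after which the matrix is a Vandermonde matrix in
`z_j = e^{i x_j}` with columns scaled by `z_j^{-n}`. Since
`z_j - z_i = 2i e^{i(x_i + x_j)/2} sin((x_j - x_i)/2)`, all phases cancel and
`det (ω_i(x_j)) = 2^{2n²} ∏_{i<j} sin((x_j - x_i)/2)`, which is positive because
`0 < x_j - x_i < 2π`.
-/

open Complex Matrix Finset Equiv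

theorem Fin.prod_prod_Ioi_mul {M : Type*} [CommMonoid M] {N : ℕ} (f : Fin N → M) :
    ∏ i, ∏ j ∈ Ioi i, (f i * f j) = (∏ i, f i) ^ (N - 1) := by
  have hswap : ∏ i, ∏ j ∈ Ioi i, f j = ∏ j, ∏ _i ∈ Iio j, f j :=
    prod_comm' fun i j => by simp
  simp only [prod_mul_distrib, hswap]
  rw [← prod_mul_distrib, ← prod_pow]
  refine prod_congr rfl fun i _ => ?_
  rw [Finset.prod_const, Finset.prod_const, ← pow_add, Fin.card_Ioi, Fin.card_Iio]
  congr 1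
  omega

theorem Fin.sum_card_Ioi (N : ℕ) : ∑ i : Fin N, #(Ioi i) = N.choose 2 := by
  simp only [Fin.card_Ioi]
  rw [Fin.sum_univ_eq_sum_range (fun i => N - 1 - i), sum_range_reflect (fun i => i),
    sum_range_id, Nat.choose_two_right]

theorem Finset.prod_range_ite_even_ne_zero {M : Type*} [CommMonoid M] (n : ℕ) (c : M) :
    ∏ i ∈ range (2 * n + 1), (if i % 2 = 0 ∧ i ≠ 0 then c else 1) = c ^ n := by
  induction n with
  | zero => simp
  | succ n ih =>
    rw [show 2 * (n + 1) + 1 = 2 * n + 1 + 1 + 1 by ring, prod_range_succ, prod_range_succ, ih,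
      if_neg (by omega), if_pos (by omega), mul_one, pow_succ]

theorem Fin.val_sub_one_of_val_ne_zero {N : ℕ} [NeZero N] {i : Fin N} (hi : (i : ℕ) ≠ 0) :
    ((i - 1 : Fin N) : ℕ) = i - 1 :=
  Fin.val_sub_one_of_ne_zero (Fin.ne_of_val_ne hi)

theorem Fin.val_add_one_of_odd {n : ℕ} {i : Fin (2 * n + 1)} (hi : (i : ℕ) % 2 = 1) :
    ((i + 1 : Fin (2 * n + 1)) : ℕ) = i + 1 :=
  Fin.val_add_one_of_lt (by rw [Fin.lt_def, Fin.val_last]; omega)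

theorem Nat.choose_two_two_mul_add_one (n : ℕ) : (2 * n + 1).choose 2 = n * (2 * n + 1) := by
  rw [Nat.choose_two_right, Nat.add_sub_cancel,
    show (2 * n + 1) * (2 * n) = n * (2 * n + 1) * 2 by ring, Nat.mul_div_cancel _ two_pos]

theorem Matrix.det_of_mul_pow {R : Type*} [CommRing R] {N : ℕ} (w v : Fin N → R) :
    (of fun k j : Fin N => w j * v j ^ (k : ℕ)).det =
      (∏ j, w j) * ∏ i, ∏ j ∈ Ioi i, (v j - v i) := by
  rw [← det_transpose, ← det_vandermonde, ← det_diagonal, ← det_mul]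
  congr 1
  ext j k
  simp [diagonal_mul, vandermonde_apply]

theorem Complex.exp_mul_I_sub_exp_mul_I (u w : ℂ) :
    exp (w * I) - exp (u * I) =
      2 * I * (exp (u / 2 * I) * exp (w / 2 * I)) * sin ((w - u) / 2) := by
  set z := (w - u) / 2
  set p := exp (u / 2 * I) * exp (w / 2 * I)
  have hu : p * exp (-z * I) = exp (u * I) := by
    simp only [p, z, ← exp_add]; ring_nf
  have hw : p * exp (z * I) = exp (w * I) := by
    simp only [p, z, ← exp_add]; ring_nf
  rw [Complex.sin]
  linear_combination hu - hw - p * (exp (-z * I) - exp (z * I)) * I_sq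

theorem Complex.prod_prod_Ioi_exp_mul_I_sub {N : ℕ} (x : Fin N → ℂ) :
    ∏ i, ∏ j ∈ Ioi i, (exp (x j * I) - exp (x i * I)) =
      (2 * I) ^ N.choose 2 * (∏ j, exp (x j / 2 * I)) ^ (N - 1) *
        ∏ i, ∏ j ∈ Ioi i, sin ((x j - x i) / 2) := by
  rw [← Fin.prod_prod_Ioi_mul, ← Fin.sum_card_Ioi, ← prod_pow_eq_pow_sum]
  simp only [exp_mul_I_sub_exp_mul_I, prod_mul_distrib, Finset.prod_const, mul_pow]

theorem Complex.I_div_two_pow_mul_two_mul_I_pow (n : ℕ) :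
    (I / 2) ^ n * (2 * I) ^ (n * (2 * n + 1)) = 2 ^ (2 * n ^ 2) := by
  calc (I / 2) ^ n * (2 * I) ^ (n * (2 * n + 1))
      = I ^ (2 * (n * (n + 1))) * 2 ^ (2 * n ^ 2) := by
        rw [show n * (2 * n + 1) = 2 * n ^ 2 + n by ring, div_pow, mul_pow, pow_add]
        field_simp
        ring
    _ = 2 ^ (2 * n ^ 2) := by rw [pow_mul, I_sq, (Nat.even_mul_succ_self n).neg_one_pow, one_mul]

theorem ofReal_Phi {m : ℕ} (ω : Fin m → ℝ → ℝ) (x : Fin m → ℝ) :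
    (Phi ω x : ℂ) = (of fun i j => (ω i (x j) : ℂ)).det := by
  rw [Phi, ← ofRealHom_eq_coe, RingHom.map_det]
  rfl

theorem prod_prod_Ioi_sin_half_sub_pos {N : ℕ} {a b : ℝ} (hab : b - a ≤ 2 * Real.pi)
    {x : Fin N → ℝ} (hx : ∀ i, x i ∈ Set.Ioo a b) (hx_mono : StrictMono x) :
    0 < ∏ i, ∏ j ∈ Ioi i, Real.sin ((x j - x i) / 2) := by
  refine prod_pos fun i _ => prod_pos fun j hj => Real.sin_pos_of_pos_of_lt_pi ?_ ?_
  · linarith [hx_mono (mem_Ioi.mp hj)]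
  · linarith [(hx i).1, (hx j).2]

-- The frequencies `0, 1, -1, 2, -2, …` replacing the rows `1, cos x, sin x, cos 2x, sin 2x, …`.
def trigFreq (i : ℕ) : ℤ := if i % 2 = 1 then ((i + 1) / 2 : ℕ) else -((i / 2 : ℕ) : ℤ)

def freqIndex (n : ℕ) (i : Fin (2 * n + 1)) : Fin (2 * n + 1) :=
  ⟨if (i : ℕ) % 2 = 1 then n + ((i : ℕ) + 1) / 2 else n - (i : ℕ) / 2, by split <;> omega⟩

theorem freqIndex_injective (n : ℕ) : Function.Injective (freqIndex n) := by
  intro i j h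
  have hval := congrArg Fin.val h
  simp only [freqIndex] at hval
  ext
  split_ifs at hval <;> omega

noncomputable def freqPerm (n : ℕ) : Perm (Fin (2 * n + 1)) :=
  Equiv.ofBijective _ (freqIndex_injective n).bijective_of_finite

theorem freqPerm_apply (n : ℕ) (i : Fin (2 * n + 1)) :
    ((freqPerm n i : ℕ) : ℤ) = n + trigFreq i := by
  simp only [freqPerm, Equiv.ofBijective_apply, freqIndex, trigFreq]
  split_ifs <;> omega

-- The two new frequencies `±(n + 1)` go to both ends of the order `-(n + 1), …, n + 1`.
theorem freqPerm_succ (n : ℕ) :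
    freqPerm (n + 1) = finRotate (2 * n + 1 + 2) *
      finSumFinEquiv.permCongr (Perm.sumCongr (freqPerm n) (Equiv.refl (Fin 2))) := by
  ext i
  refine Fin.addCases (m := 2 * n + 1) (n := 2) (fun i => ?_) (fun i => ?_) i <;>
  · simp only [Perm.mul_apply, permCongr_apply, freqPerm, ofBijective_apply, coe_ofBijective,
      freqIndex, sumCongr_apply, Sum.map_inl, Sum.map_inr, coe_refl, id_eq,
      finSumFinEquiv_symm_apply_castAdd, finSumFinEquiv_symm_apply_natAdd,
      finSumFinEquiv_apply_left, finSumFinEquiv_apply_right, Fin.castAdd_mk, Fin.val_castAdd,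
      Fin.val_natAdd, finRotate_apply, Fin.val_add_one, Fin.ext_iff, Fin.val_last]
    split_ifs <;> omega

theorem sign_freqPerm (n : ℕ) : Perm.sign (freqPerm n) = 1 := by
  induction n with
  | zero => rw [Subsingleton.elim (α := Perm (Fin 1)) (freqPerm 0) 1, Perm.sign_one]
  | succ n ih =>
    rw [freqPerm_succ, Perm.sign_mul, Perm.sign_permCongr, Perm.sign_sumCongr, ih,
      Perm.sign_refl, mul_one, mul_one]
    exact (sign_finRotate _).trans (Even.neg_one_pow ⟨n + 1, by omega⟩)

noncomputable def trigSystem (n : ℕ) : Fin (2 * n + 1) → ℝ → ℝ := fun i x =>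
  if (i : ℕ) = 0 then 1
  else if (i : ℕ) % 2 = 1 then Real.cos (((((i : ℕ) + 1) / 2 : ℕ) : ℝ) * x)
  else Real.sin ((((i : ℕ) / 2 : ℕ) : ℝ) * x)

section TrigMatrix

variable (n : ℕ) (x : Fin (2 * n + 1) → ℝ)

noncomputable def trigMatrix : Matrix (Fin (2 * n + 1)) (Fin (2 * n + 1)) ℂ :=
  of fun i j => (trigSystem n i (x j) : ℂ)

noncomputable def halfExpMatrix : Matrix (Fin (2 * n + 1)) (Fin (2 * n + 1)) ℂ :=
  of fun i j => if (i : ℕ) % 2 = 1 then exp (trigFreq i * x j * I) else trigMatrix n x i j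

noncomputable def expMatrix : Matrix (Fin (2 * n + 1)) (Fin (2 * n + 1)) ℂ :=
  of fun i j => exp (trigFreq i * x j * I)

noncomputable def shiftedVandermonde : Matrix (Fin (2 * n + 1)) (Fin (2 * n + 1)) ℂ :=
  of fun k j => exp (-n * x j * I) * exp (x j * I) ^ (k : ℕ)

noncomputable def cosToExpMatrix : Matrix (Fin (2 * n + 1)) (Fin (2 * n + 1)) ℂ :=
  of fun i => if (i : ℕ) % 2 = 1 then Pi.single i 1 - I • Pi.single (i + 1) 1 else Pi.single i 1

theorem cosToExpMatrix_row (i : Fin (2 * n + 1)) : cosToExpMatrix n i =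
    if (i : ℕ) % 2 = 1 then Pi.single i 1 - I • Pi.single (i + 1) 1 else Pi.single i 1 := rfl

noncomputable def sinToExpMatrix : Matrix (Fin (2 * n + 1)) (Fin (2 * n + 1)) ℂ :=
  of fun i =>
    if (i : ℕ) % 2 = 0 ∧ (i : ℕ) ≠ 0 then (I / 2) • (Pi.single i 1 - Pi.single (i - 1) 1)
    else Pi.single i 1

theorem sinToExpMatrix_row (i : Fin (2 * n + 1)) : sinToExpMatrix n i =
    if (i : ℕ) % 2 = 0 ∧ (i : ℕ) ≠ 0 then (I / 2) • (Pi.single i 1 - Pi.single (i - 1) 1)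
    else Pi.single i 1 := rfl

theorem det_cosToExpMatrix : (cosToExpMatrix n).det = 1 := by
  rw [det_of_isUpperTriangular]
  · refine prod_eq_one fun i _ => ?_
    rw [cosToExpMatrix_row]
    split_ifs with hi
    · have hsucc : i + 1 ≠ i := Fin.ne_of_val_ne (by rw [Fin.val_add_one_of_odd hi]; omega)
      simp [Pi.single_eq_of_ne hsucc.symm]
    · simp
  · intro i k (hki : k < i)
    rw [cosToExpMatrix_row]
    split_ifs with hi
    · have hsucc : k ≠ i + 1 :=
        Fin.ne_of_val_ne (by rw [Fin.val_add_one_of_odd hi]; have := Fin.lt_def.mp hki; omega)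
      simp [Pi.single_eq_of_ne hki.ne, Pi.single_eq_of_ne hsucc]
    · simp [Pi.single_eq_of_ne hki.ne]

theorem det_sinToExpMatrix : (sinToExpMatrix n).det = (I / 2) ^ n := by
  rw [det_of_isLowerTriangular]
  · have hdiag (i : Fin (2 * n + 1)) : sinToExpMatrix n i i =
        if (i : ℕ) % 2 = 0 ∧ (i : ℕ) ≠ 0 then I / 2 else 1 := by
      rw [sinToExpMatrix_row]
      split_ifs with hi
      · have hpred : i ≠ i - 1 :=
          Fin.ne_of_val_ne (by rw [Fin.val_sub_one_of_val_ne_zero hi.2]; omega)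
        simp [Pi.single_eq_of_ne hpred]
      · simp
    simp only [hdiag]
    rw [Fin.prod_univ_eq_prod_range (fun i => if i % 2 = 0 ∧ i ≠ 0 then I / 2 else 1),
      prod_range_ite_even_ne_zero]
  · intro i k (hik : i < k)
    rw [sinToExpMatrix_row]
    split_ifs with hi
    · have hpred : k ≠ i - 1 := Fin.ne_of_val_ne (by
        rw [Fin.val_sub_one_of_val_ne_zero hi.2]; have := Fin.lt_def.mp hik; omega)
      simp [Pi.single_eq_of_ne hik.ne', Pi.single_eq_of_ne hpred]
    · simp [Pi.single_eq_of_ne hik.ne']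

theorem trigMatrix_eq_mul : trigMatrix n x = cosToExpMatrix n * halfExpMatrix n x := by
  ext i j
  rw [mul_apply', cosToExpMatrix_row]
  split_ifs with hi
  · rw [sub_dotProduct, smul_dotProduct, single_dotProduct, single_dotProduct]
    simp only [halfExpMatrix, trigMatrix, trigSystem, trigFreq, of_apply,
      Fin.val_add_one_of_odd hi, if_pos hi, if_neg (show (i : ℕ) ≠ 0 by omega),
      if_neg (show (i : ℕ) + 1 ≠ 0 by omega), if_neg (show ¬((i : ℕ) + 1) % 2 = 1 by omega)]
    simp only [Int.cast_natCast, ofReal_cos, ofReal_sin, ofReal_mul, ofReal_natCast, exp_mul_I]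
    ring
  · simp [halfExpMatrix, hi]

theorem halfExpMatrix_eq_mul : halfExpMatrix n x = sinToExpMatrix n * expMatrix n x := by
  ext i j
  rw [mul_apply', sinToExpMatrix_row]
  split_ifs with hi
  · obtain ⟨heven, hne⟩ := hi
    rw [smul_dotProduct, sub_dotProduct, single_dotProduct, single_dotProduct]
    simp only [halfExpMatrix, trigMatrix, trigSystem, expMatrix, trigFreq, of_apply,
      Fin.val_sub_one_of_val_ne_zero hne, if_neg (show ¬(i : ℕ) % 2 = 1 by omega), if_neg hne,
      if_pos (show ((i : ℕ) - 1) % 2 = 1 by omega),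
      Nat.sub_add_cancel (Nat.one_le_iff_ne_zero.mpr hne)]
    simp only [Int.cast_neg, Int.cast_natCast, ofReal_sin, ofReal_mul, ofReal_natCast, one_mul,
      smul_eq_mul, Complex.sin, neg_mul]
    ring
  · rw [single_dotProduct, one_mul]
    simp only [halfExpMatrix, trigMatrix, trigSystem, expMatrix, of_apply]
    split_ifs with hodd h0
    · rfl
    · simp [h0, trigFreq]
    · omega

theorem expMatrix_eq_submatrix :
    expMatrix n x = (shiftedVandermonde n x).submatrix (freqPerm n) id := by
  ext i j
  have hσ : ((freqPerm n i : ℕ) : ℂ) = n + trigFreq i := by exact_mod_cast freqPerm_apply n i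
  simp only [expMatrix, shiftedVandermonde, submatrix_apply, of_apply, id, ← exp_nat_mul,
    ← exp_add, hσ]
  ring_nf

theorem det_trigMatrix : (trigMatrix n x).det =
    2 ^ (2 * n ^ 2) * ∏ i, ∏ j ∈ Ioi i, (Real.sin ((x j - x i) / 2) : ℂ) := by
  rw [trigMatrix_eq_mul, det_mul, det_cosToExpMatrix, one_mul, halfExpMatrix_eq_mul, det_mul,
    det_sinToExpMatrix, expMatrix_eq_submatrix, det_permute, sign_freqPerm, shiftedVandermonde,
    det_of_mul_pow, prod_prod_Ioi_exp_mul_I_sub]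
  -- each `x_j` occurs in `2n` of the pairs `i < j`, so the half-angle phases cancel `e^{-i n x_j}`
  have hphase : (∏ j, exp (-n * x j * I)) * (∏ j, exp (x j / 2 * I)) ^ (2 * n) = 1 := by
    rw [← prod_pow, ← prod_mul_distrib]
    refine prod_eq_one fun j _ => ?_
    rw [← exp_nat_mul, ← exp_add, ← exp_zero]
    push_cast
    ring_nf
  rw [Nat.choose_two_two_mul_add_one, Nat.add_sub_cancel, ← I_div_two_pow_mul_two_mul_I_pow]
  push_cast
  set S := ∏ i, ∏ j ∈ Ioi i, sin ((x j - x i : ℂ) / 2)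
  linear_combination (I / 2) ^ n * (2 * I) ^ (n * (2 * n + 1)) * S * hphase

end TrigMatrix

theorem Phi_trigSystem (n : ℕ) (x : Fin (2 * n + 1) → ℝ) :
    Phi (trigSystem n) x =
      2 ^ (2 * n ^ 2) * ∏ i, ∏ j ∈ Ioi i, Real.sin ((x j - x i) / 2) := by
  exact_mod_cast (ofReal_Phi (trigSystem n) x).trans (det_trigMatrix n x)

/-- The function `ω(x) = (1, cos x, sin x, …, cos nx, sin nx)` is a `(2n+1)`-dimensional
positive Chebyshev system over any open interval of length at most `2π`. -/
theorem trig_chebyshev_odd (n : ℕ) (a b : ℝ) (hab : b - a ≤ 2 * Real.pi) :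
    IsPosChebyshev
      (fun i : Fin (2 * n + 1) => fun x : ℝ =>
        if (i : ℕ) = 0 then 1
        else if (i : ℕ) % 2 = 1 then Real.cos (((((i : ℕ) + 1) / 2 : ℕ) : ℝ) * x)
        else Real.sin ((((i : ℕ) / 2 : ℕ) : ℝ) * x))
      (Set.Ioo a b) := by
  intro x hx hx_mono
  change 0 < Phi (trigSystem n) x
  rw [Phi_trigSystem]
  exact mul_pos (by positivity) (prod_prod_Ioi_sin_half_sub_pos hab hx hx_mono)
end
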